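/- arXiv:1907.00304 — 2 statements merged into one kernel-verified Lean document; each statement's English description precedes it below -/
import Mathlib

section
/- For every a > 1, every n ≥ 2, and every i with 2 ≤ i ≤ n, the eigenvalues of FᵀF satisfy ξ_{n−1, i−1} ≤ μ_{n,i} ≤ ξ_{n,i}, where ξ_{m,j} = 1 + a² − 2a·cos( jπ/(m+1) ). In particular μ_{n,i} ∈ [(a−1)², (a+1)²] for all 2 ≤ i ≤ n. -/
/-!
Write `S` for the lower shift matrix, so that `F = 1 - a S`, and let
`T_m = (1 + a²) - a (S + Sᵀ)` be the tridiagonal Toeplitz matrix of size `m`, whose eigenvalues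
are the `ξ_{m,j}`, with eigenvectors `(sin (k j π / (m + 1)))_k`. Since
`FᵀF = T_n - a² e_n e_nᵀ`, we have `FᵀF ≤ T_n` as quadratic forms, and the leading
`(n - 1) × (n - 1)` block of `FᵀF` is `T_{n-1}`. Both bounds then come from the same dimension
count: the span of the eigenvectors of one matrix with eigenvalues `≥ c` meets the span of the
eigenvectors of the other with eigenvalues `≤ d`, and comparing Rayleigh quotients at a common
nonzero vector gives `c ≤ d`.
-/

open Matrix Real

/-- The lower-bidiagonal matrix `F` with `1` on the diagonal and `−a` on the subdiagonal. -/
def Fmat (a : ℝ) (n : ℕ) : Matrix (Fin n) (Fin n) ℝ :=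
  fun i j => if (i : ℕ) = (j : ℕ) then 1 else if (i : ℕ) = (j : ℕ) + 1 then -a else 0

/-- `ξ_{m,j} = 1 + a² − 2a·cos(jπ/(m+1))`. -/
noncomputable def xiVal (a : ℝ) (m j : ℕ) : ℝ :=
  1 + a ^ 2 - 2 * a * Real.cos (j * Real.pi / (m + 1))

theorem Submodule.exists_ne_zero_mem_inf_of_finrank_lt {K V : Type*} [DivisionRing K]
    [AddCommGroup V] [Module K V] [FiniteDimensional K V] {U W : Submodule K V}
    (h : Module.finrank K V < Module.finrank K U + Module.finrank K W) :
    ∃ x ∈ U ⊓ W, x ≠ 0 := by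
  have hsup := Submodule.finrank_le (U ⊔ W)
  have hinf : 0 < Module.finrank K ↥(U ⊓ W) := by
    have := Submodule.finrank_sup_add_finrank_inf_eq U W
    omega
  obtain ⟨⟨x, hx⟩, hx0⟩ := Module.finrank_pos_iff_exists_ne_zero.mp hinf
  exact ⟨x, hx, by simpa using hx0⟩

namespace Matrix

variable {m ι : Type*} [Fintype m]

theorem sum_smul_dotProduct_sum_smul [Fintype ι] {v : ι → m → ℝ}
    (hv : Pairwise fun i j => v i ⬝ᵥ v j = 0) (c d : ι → ℝ) :
    (∑ i, c i • v i) ⬝ᵥ (∑ j, d j • v j) = ∑ i, c i * d i * (v i ⬝ᵥ v i) := by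
  simp only [sum_dotProduct, dotProduct_sum, smul_dotProduct, dotProduct_smul, smul_eq_mul]
  refine Finset.sum_congr rfl fun i _ => ?_
  rw [Finset.sum_eq_single i (fun j _ hji => by rw [hv hji, mul_zero]) (by simp)]
  ring

theorem IsSymm.dotProduct_eq_zero_of_mulVec_eq_smul {A : Matrix m m ℝ} (hA : A.IsSymm)
    {v w : m → ℝ} {c d : ℝ} (hv : A *ᵥ v = c • v) (hw : A *ᵥ w = d • w) (hcd : c ≠ d) :
    v ⬝ᵥ w = 0 := by
  have h : (A *ᵥ v) ⬝ᵥ w = v ⬝ᵥ (A *ᵥ w) := by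
    rw [dotProduct_mulVec, ← mulVec_transpose, hA.eq]
  rw [hv, hw, smul_dotProduct, dotProduct_smul, smul_eq_mul, smul_eq_mul] at h
  exact (mul_eq_zero.mp (by linarith : (c - d) * (v ⬝ᵥ w) = 0)).resolve_left (sub_ne_zero.mpr hcd)

structure IsOrthogonalEigenfamily (A : Matrix m m ℝ) (v : ι → m → ℝ) (ev : ι → ℝ) : Prop where
  mulVec_eq : ∀ i, A *ᵥ v i = ev i • v i
  pairwise_dotProduct_eq_zero : Pairwise fun i j => v i ⬝ᵥ v j = 0
  ne_zero : ∀ i, v i ≠ 0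

namespace IsOrthogonalEigenfamily

variable {A : Matrix m m ℝ} {v : ι → m → ℝ} {ev : ι → ℝ}

theorem of_isSymm (hA : A.IsSymm) (hv : ∀ i, A *ᵥ v i = ev i • v i)
    (hev : Function.Injective ev) (hne : ∀ i, v i ≠ 0) : IsOrthogonalEigenfamily A v ev where
  mulVec_eq := hv
  pairwise_dotProduct_eq_zero _ _ hij :=
    hA.dotProduct_eq_zero_of_mulVec_eq_smul (hv _) (hv _) (hev.ne hij)
  ne_zero := hne

theorem comp (h : IsOrthogonalEigenfamily A v ev) {κ : Type*} {f : κ → ι}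
    (hf : Function.Injective f) : IsOrthogonalEigenfamily A (v ∘ f) (ev ∘ f) where
  mulVec_eq i := h.mulVec_eq (f i)
  pairwise_dotProduct_eq_zero _ _ hij := h.pairwise_dotProduct_eq_zero (hf.ne hij)
  ne_zero i := h.ne_zero (f i)

theorem neg (h : IsOrthogonalEigenfamily A v ev) : IsOrthogonalEigenfamily (-A) v (-ev) where
  mulVec_eq i := by rw [neg_mulVec, h.mulVec_eq, Pi.neg_apply, neg_smul]
  pairwise_dotProduct_eq_zero := h.pairwise_dotProduct_eq_zero
  ne_zero := h.ne_zero

theorem linearIndependent (h : IsOrthogonalEigenfamily A v ev) : LinearIndependent ℝ v := by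
  classical
  rw [linearIndependent_iff']
  intro s c hsum i hi
  have hdot : v i ⬝ᵥ ∑ j ∈ s, c j • v j = c i * (v i ⬝ᵥ v i) := by
    simp only [dotProduct_sum, dotProduct_smul, smul_eq_mul]
    exact Finset.sum_eq_single_of_mem i hi fun j _ hji => by
      rw [h.pairwise_dotProduct_eq_zero hji.symm, mul_zero]
  rw [hsum, dotProduct_zero] at hdot
  exact (mul_eq_zero.mp hdot.symm).resolve_right
    (fun h0 => h.ne_zero i (dotProduct_self_eq_zero.mp h0))

theorem dotProduct_mulVec_le_of_mem_span (h : IsOrthogonalEigenfamily A v ev) [Fintype ι]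
    {d : ℝ} (hd : ∀ i, ev i ≤ d) {x : m → ℝ} (hx : x ∈ Submodule.span ℝ (Set.range v)) :
    x ⬝ᵥ (A *ᵥ x) ≤ d * (x ⬝ᵥ x) := by
  obtain ⟨c, rfl⟩ := (Submodule.mem_span_range_iff_exists_fun ℝ).mp hx
  have hAx : A *ᵥ ∑ i, c i • v i = ∑ i, (c i * ev i) • v i := by
    simp only [mulVec_sum, mulVec_smul, h.mulVec_eq, smul_smul]
  rw [hAx, sum_smul_dotProduct_sum_smul h.pairwise_dotProduct_eq_zero,
    sum_smul_dotProduct_sum_smul h.pairwise_dotProduct_eq_zero, Finset.mul_sum]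
  refine Finset.sum_le_sum fun i _ => ?_
  have : 0 ≤ c i * c i * (v i ⬝ᵥ v i) :=
    mul_nonneg (mul_self_nonneg _) (dotProduct_self_star_nonneg (v i))
  nlinarith [hd i]

theorem le_dotProduct_mulVec_of_mem_span (h : IsOrthogonalEigenfamily A v ev) [Fintype ι]
    {c : ℝ} (hc : ∀ i, c ≤ ev i) {x : m → ℝ} (hx : x ∈ Submodule.span ℝ (Set.range v)) :
    c * (x ⬝ᵥ x) ≤ x ⬝ᵥ (A *ᵥ x) := by
  have := h.neg.dotProduct_mulVec_le_of_mem_span (d := -c) (fun i => neg_le_neg (hc i)) hx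
  rw [neg_mulVec, dotProduct_neg] at this
  linarith

/-- With `P = 1` this compares the eigenvalues of `A ≤ B`; with `P` the inclusion of a set of
coordinates it is Cauchy interlacing for the principal submatrix `A` of `B`. -/
theorem le_of_card_lt {m' κ : Type*} [Fintype m'] [DecidableEq m'] [Fintype ι] [Fintype κ]
    {A : Matrix m' m' ℝ} {B : Matrix m m ℝ} {P : Matrix m m' ℝ} {v : ι → m' → ℝ}
    {w : κ → m → ℝ} {ev : ι → ℝ} {ew : κ → ℝ} {c d : ℝ}
    (hv : IsOrthogonalEigenfamily A v ev) (hw : IsOrthogonalEigenfamily B w ew)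
    (hP : Pᵀ * P = 1) (hAB : ∀ y, y ⬝ᵥ (A *ᵥ y) ≤ y ⬝ᵥ ((Pᵀ * B * P) *ᵥ y))
    (hc : ∀ i, c ≤ ev i) (hd : ∀ j, ew j ≤ d)
    (hcard : Fintype.card m < Fintype.card ι + Fintype.card κ) : c ≤ d := by
  have hconj : ∀ y, y ⬝ᵥ ((Pᵀ * B * P) *ᵥ y) = (P *ᵥ y) ⬝ᵥ (B *ᵥ (P *ᵥ y)) := fun y => by
    rw [← mulVec_mulVec, ← mulVec_mulVec, dotProduct_mulVec, vecMul_transpose]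
  have hPinj : Function.Injective P.mulVecLin := fun y y' hyy' => by
    simpa [mulVec_mulVec, hP] using congrArg (Pᵀ *ᵥ ·) hyy'
  let U := (Submodule.span ℝ (Set.range v)).map P.mulVecLin
  have hU : Module.finrank ℝ U = Fintype.card ι :=
    (Submodule.equivMapOfInjective _ hPinj _).finrank_eq.symm.trans
      (finrank_span_eq_card hv.linearIndependent)
  obtain ⟨x, ⟨hxU, hxW⟩, hx0⟩ :=
    Submodule.exists_ne_zero_mem_inf_of_finrank_lt (U := U) (W := Submodule.span ℝ (Set.range w))
      (by rwa [Module.finrank_fintype_fun_eq_card, hU, finrank_span_eq_card hw.linearIndependent])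
  obtain ⟨y, hy, rfl⟩ := Submodule.mem_map.mp hxU
  have hnorm : (P *ᵥ y) ⬝ᵥ (P *ᵥ y) = y ⬝ᵥ y := by
    have h := dotProduct_mulVec y Pᵀ (P *ᵥ y)
    rwa [vecMul_transpose, mulVec_mulVec, hP, one_mulVec, eq_comm] at h
  have hpos : 0 < y ⬝ᵥ y := by
    rw [← hnorm]
    exact dotProduct_self_star_pos_iff.mpr hx0
  refine le_of_mul_le_mul_right ?_ hpos
  calc c * (y ⬝ᵥ y) ≤ y ⬝ᵥ (A *ᵥ y) := hv.le_dotProduct_mulVec_of_mem_span hc hy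
    _ ≤ (P *ᵥ y) ⬝ᵥ (B *ᵥ (P *ᵥ y)) := (hAB y).trans_eq (hconj y)
    _ ≤ d * (y ⬝ᵥ y) := hnorm ▸ hw.dotProduct_mulVec_le_of_mem_span hd hxW

end IsOrthogonalEigenfamily

theorem IsHermitian.isOrthogonalEigenfamily [DecidableEq m] {A : Matrix m m ℝ}
    (hA : A.IsHermitian) :
    IsOrthogonalEigenfamily A (fun i => (hA.eigenvectorBasis i).ofLp) hA.eigenvalues where
  mulVec_eq := hA.mulVec_eigenvectorBasis
  pairwise_dotProduct_eq_zero i j hij := by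
    have : inner ℝ (hA.eigenvectorBasis i) (hA.eigenvectorBasis j) = 0 :=
      hA.eigenvectorBasis.orthonormal.2 hij
    rwa [EuclideanSpace.inner_eq_star_dotProduct, star_trivial, dotProduct_comm] at this
  ne_zero i h0 :=
    hA.eigenvectorBasis.orthonormal.ne_zero i (by simpa using congrArg (WithLp.toLp 2) h0)

theorem transpose_one_submatrix_mul_mul {l α : Type*} [DecidableEq m] [NonAssocSemiring α]
    (e : l → m) (B : Matrix m m α) :
    ((1 : Matrix m m α).submatrix id e)ᵀ * B * (1 : Matrix m m α).submatrix id e =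
      B.submatrix e e := by
  have h1 := one_submatrix_mul e (Equiv.refl m) B
  have h2 := mul_submatrix_one (Equiv.refl m) e (B.submatrix e id)
  simp only [Equiv.coe_refl, Equiv.refl_symm, Function.id_comp] at h1 h2
  rw [transpose_submatrix, transpose_one, h1, h2, submatrix_submatrix]
  rfl

end Matrix

def shiftMat (n : ℕ) : Matrix (Fin n) (Fin n) ℝ :=
  fun i j => if (i : ℕ) = (j : ℕ) + 1 then 1 else 0

noncomputable def Tmat (a : ℝ) (n : ℕ) : Matrix (Fin n) (Fin n) ℝ :=
  (1 + a ^ 2) • 1 - a • (shiftMat n + (shiftMat n)ᵀ)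

theorem Fmat_eq_one_sub_smul_shiftMat (a : ℝ) (n : ℕ) : Fmat a n = 1 - a • shiftMat n := by
  ext i j
  simp only [Fmat, shiftMat, Matrix.sub_apply, one_apply, Matrix.smul_apply, smul_eq_mul,
    ← Fin.val_inj]
  split_ifs <;> first | omega | ring

theorem Tmat_isSymm (a : ℝ) (n : ℕ) : (Tmat a n).IsSymm := by
  simp only [IsSymm, Tmat, transpose_sub, transpose_smul, transpose_one, transpose_add,
    transpose_transpose, add_comm]

theorem one_sub_shiftMat_transpose_mul_self (n : ℕ) :
    1 - (shiftMat n)ᵀ * shiftMat n =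
      diagonal fun i : Fin n => if (i : ℕ) + 1 = n then 1 else 0 := by
  ext i j
  have hsum : ((shiftMat n)ᵀ * shiftMat n) i j = if (i : ℕ) + 1 < n ∧ i = j then 1 else 0 := by
    simp only [mul_apply, transpose_apply, shiftMat, ite_mul, one_mul, zero_mul]
    rw [Fin.sum_univ_eq_sum_range (fun k => if k = (i : ℕ) + 1 then
      (if k = (j : ℕ) + 1 then (1 : ℝ) else 0) else 0), Finset.sum_ite_eq']
    simp [← Fin.val_inj, ite_and]
  rw [Matrix.sub_apply, hsum, one_apply, diagonal_apply]
  split_ifs <;> first | omega | simp_all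

theorem Fmat_transpose_mul_self (a : ℝ) (n : ℕ) :
    (Fmat a n)ᵀ * Fmat a n =
      Tmat a n - diagonal fun i : Fin n => if (i : ℕ) + 1 = n then a ^ 2 else 0 := by
  have hcorr : (diagonal fun i : Fin n => if (i : ℕ) + 1 = n then a ^ 2 else 0) =
      a ^ 2 • (1 - (shiftMat n)ᵀ * shiftMat n) := by
    rw [one_sub_shiftMat_transpose_mul_self, ← diagonal_smul]
    congr 1; ext i; simp
  rw [hcorr, Fmat_eq_one_sub_smul_shiftMat, Tmat]
  simp only [transpose_sub, transpose_one, transpose_smul, sub_mul, mul_sub, one_mul, mul_one,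
    smul_mul_assoc, mul_smul_comm]
  module

theorem dotProduct_mulVec_Fmat_transpose_mul_self_le (a : ℝ) (n : ℕ) (x : Fin n → ℝ) :
    x ⬝ᵥ (((Fmat a n)ᵀ * Fmat a n) *ᵥ x) ≤ x ⬝ᵥ (Tmat a n *ᵥ x) := by
  rw [Fmat_transpose_mul_self, sub_mulVec, dotProduct_sub, sub_le_self_iff]
  simp only [dotProduct, mulVec_diagonal]
  refine Finset.sum_nonneg fun i _ => ?_
  split_ifs <;> nlinarith [sq_nonneg (a * x i)]

theorem Tmat_submatrix_castSucc (a : ℝ) (m : ℕ) :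
    (Tmat a (m + 1)).submatrix Fin.castSucc Fin.castSucc = Tmat a m := by
  ext i j
  simp [Tmat, shiftMat, one_apply]

theorem Fmat_transpose_mul_self_submatrix_castSucc (a : ℝ) (m : ℕ) :
    ((Fmat a (m + 1))ᵀ * Fmat a (m + 1)).submatrix Fin.castSucc Fin.castSucc = Tmat a m := by
  ext i j
  rw [← Tmat_submatrix_castSucc, Fmat_transpose_mul_self]
  simp [diagonal_apply, i.isLt.ne]

theorem shiftMat_mulVec (m : ℕ) (g : ℕ → ℝ) (hg : g 0 = 0) :
    shiftMat m *ᵥ (fun j : Fin m => g (j + 1)) = fun i : Fin m => g i := by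
  ext i
  simp only [mulVec, dotProduct, shiftMat, ite_mul, one_mul, zero_mul]
  have hshift := Finset.sum_range_succ' (fun j => if (i : ℕ) = j then g j else 0) m
  simp only [hg, ite_self, add_zero] at hshift
  rw [Fin.sum_univ_eq_sum_range (fun j => if (i : ℕ) = j + 1 then g (j + 1) else 0), ← hshift,
    Finset.sum_ite_eq, if_pos (Finset.mem_range.mpr (by omega))]

theorem shiftMat_transpose_mulVec (m : ℕ) (g : ℕ → ℝ) (hg : g (m + 1) = 0) :
    (shiftMat m)ᵀ *ᵥ (fun j : Fin m => g (j + 1)) = fun i : Fin m => g (i + 2) := by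
  ext i
  simp only [mulVec, dotProduct, transpose_apply, shiftMat, ite_mul, one_mul, zero_mul]
  rw [Fin.sum_univ_eq_sum_range (fun j => if j = (i : ℕ) + 1 then g (j + 1) else 0),
    Finset.sum_ite_eq']
  split_ifs with hi
  · rfl
  · rw [show (i : ℕ) + 2 = m + 1 by have := Finset.mem_range.not.mp hi; omega, hg]

theorem xiVal_strictMonoOn {a : ℝ} (ha : 0 < a) (m : ℕ) :
    StrictMonoOn (xiVal a m) (Set.Iic (m + 1)) := by
  intro p hp q hq hpq
  have hm : (0 : ℝ) < m + 1 := by positivity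
  have hmem : ∀ j ∈ Set.Iic (m + 1), (j * π / (m + 1) : ℝ) ∈ Set.Icc 0 π := fun j hj => by
    have : (j : ℝ) ≤ m + 1 := by exact_mod_cast hj
    refine ⟨by positivity, ?_⟩
    rw [div_le_iff₀ hm]
    nlinarith [pi_pos]
  have hcos := strictAntiOn_cos (hmem p hp) (hmem q hq) (by gcongr)
  simp only [xiVal]
  nlinarith

theorem sq_sub_one_le_xiVal {a : ℝ} (ha : 0 ≤ a) (m j : ℕ) : (a - 1) ^ 2 ≤ xiVal a m j := by
  have := mul_nonneg ha (sub_nonneg.mpr (cos_le_one (j * π / (m + 1))))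
  simp only [xiVal]
  nlinarith

theorem xiVal_le_sq_add_one {a : ℝ} (ha : 0 ≤ a) (m j : ℕ) : xiVal a m j ≤ (a + 1) ^ 2 := by
  have := mul_nonneg ha (neg_le_iff_add_nonneg.mp (neg_one_le_cos (j * π / (m + 1))))
  simp only [xiVal]
  nlinarith

noncomputable def sineVec (m : ℕ) (j : Fin m) : Fin m → ℝ :=
  fun k => sin ((k + 1 : ℕ) * ((j + 1 : ℕ) * π / (m + 1)))

theorem Tmat_mulVec_sineVec (a : ℝ) (m : ℕ) (j : Fin m) :
    Tmat a m *ᵥ sineVec m j = xiVal a m (j + 1) • sineVec m j := by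
  set θ : ℝ := (j + 1 : ℕ) * π / (m + 1)
  have hθ : sin ((m + 1 : ℕ) * θ) = 0 := by
    rw [show ((m + 1 : ℕ) : ℝ) * θ = (j + 1 : ℕ) * π by simp only [θ]; push_cast; field_simp]
    exact sin_nat_mul_pi _
  -- `sin (0 * θ) = sin ((m + 1) * θ) = 0`, so the truncated shifts act on `sineVec` as the
  -- shifts of the whole sequence `t ↦ sin (t * θ)`
  have hS := shiftMat_mulVec m (fun t => sin (t * θ)) (by simp)
  have hST := shiftMat_transpose_mulVec m (fun t => sin (t * θ)) hθ
  have hv : sineVec m j = fun k : Fin m => sin ((k + 1 : ℕ) * θ) := rfl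
  rw [hv, Tmat, sub_mulVec, smul_mulVec, smul_mulVec, one_mulVec, add_mulVec, hS, hST]
  ext k
  have hxi : xiVal a m (j + 1) = 1 + a ^ 2 - 2 * a * cos θ := rfl
  simp only [Pi.sub_apply, Pi.smul_apply, Pi.add_apply, smul_eq_mul, hxi]
  push_cast
  have hsum : sin (k * θ) + sin ((k + 2) * θ) = 2 * cos θ * sin ((k + 1) * θ) := by
    rw [show (k : ℝ) * θ = (k + 1) * θ - θ by ring,
      show ((k : ℝ) + 2) * θ = (k + 1) * θ + θ by ring, sin_sub, sin_add]
    ring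
  linear_combination (-a) * hsum

theorem sineVec_ne_zero (m : ℕ) (j : Fin m) : sineVec m j ≠ 0 := by
  intro h
  have hm : (0 : ℝ) < m + 1 := by positivity
  have hj : ((j + 1 : ℕ) : ℝ) < m + 1 := by exact_mod_cast Nat.succ_lt_succ j.isLt
  have hpos : 0 < sin ((j + 1 : ℕ) * π / (m + 1)) := by
    refine sin_pos_of_pos_of_lt_pi (by positivity) ?_
    rw [div_lt_iff₀ hm]
    nlinarith [pi_pos]
  have h0 := congrFun h ⟨0, j.pos⟩
  simp only [sineVec, Pi.zero_apply, Nat.cast_one, zero_add, one_mul] at h0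
  exact hpos.ne' h0

theorem isOrthogonalEigenfamily_sineVec {a : ℝ} (ha : 0 < a) (m : ℕ) :
    IsOrthogonalEigenfamily (Tmat a m) (sineVec m) (fun j => xiVal a m (j + 1)) :=
  .of_isSymm (Tmat_isSymm a m) (Tmat_mulVec_sineVec a m)
    (fun i j hij => Fin.ext (by
      have := (xiVal_strictMonoOn ha m).injOn (Set.mem_Iic.mpr (by omega))
        (Set.mem_Iic.mpr (by omega)) hij
      omega))
    (sineVec_ne_zero m)

theorem eigenvalue_le_xiVal {a : ℝ} (ha : 0 < a) {n : ℕ} {u : Fin n → Fin n → ℝ}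
    {μ : Fin n → ℝ} (hu : IsOrthogonalEigenfamily ((Fmat a n)ᵀ * Fmat a n) u μ)
    (hμ : Monotone μ) (k : Fin n) : μ k ≤ xiVal a n (k + 1) := by
  refine (hu.comp Subtype.val_injective).le_of_card_lt
    ((isOrthogonalEigenfamily_sineVec ha n).comp Subtype.val_injective) (P := 1)
    (ι := Set.Ici k) (κ := Set.Iic k) (by simp)
    (by simpa using dotProduct_mulVec_Fmat_transpose_mul_self_le a n)
    (fun j => hμ j.2) (fun j => ?_) ?_
  · exact (xiVal_strictMonoOn ha n).monotoneOn (Set.mem_Iic.mpr (by omega))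
      (Set.mem_Iic.mpr (by omega)) (by have := Fin.le_iff_val_le_val.mp j.2; omega)
  · simp only [Fintype.card_fin, Fintype.card_Ici, Fintype.card_Iic, Fin.card_Ici, Fin.card_Iic]
    omega

theorem xiVal_le_eigenvalue {a : ℝ} (ha : 0 < a) {m : ℕ} {u : Fin (m + 1) → Fin (m + 1) → ℝ}
    {μ : Fin (m + 1) → ℝ}
    (hu : IsOrthogonalEigenfamily ((Fmat a (m + 1))ᵀ * Fmat a (m + 1)) u μ)
    (hμ : Monotone μ) {k : Fin (m + 1)} (hk : 1 ≤ (k : ℕ)) : xiVal a m k ≤ μ k := by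
  let k' : Fin m := ⟨k - 1, by omega⟩
  refine ((isOrthogonalEigenfamily_sineVec ha m).comp Subtype.val_injective).le_of_card_lt
    (hu.comp Subtype.val_injective) (P := (1 : Matrix _ _ ℝ).submatrix id Fin.castSucc)
    (ι := Set.Ici k') (κ := Set.Iic k) ?_ (fun y => ?_) (fun j => ?_) (fun j => hμ j.2) ?_
  · simpa [submatrix_one _ (Fin.castSucc_injective m)] using
      transpose_one_submatrix_mul_mul Fin.castSucc (1 : Matrix (Fin (m + 1)) (Fin (m + 1)) ℝ)
  · rw [transpose_one_submatrix_mul_mul, Fmat_transpose_mul_self_submatrix_castSucc]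
  · exact (xiVal_strictMonoOn ha m).monotoneOn (Set.mem_Iic.mpr (by omega))
      (Set.mem_Iic.mpr (by omega))
      (by have := Fin.le_iff_val_le_val.mp j.2; simp only [k'] at this; omega)
  · simp only [Fintype.card_fin, Fintype.card_Ici, Fintype.card_Iic, Fin.card_Ici, Fin.card_Iic,
      k']
    omega

theorem statement16_general (a : ℝ) (ha : 1 < a) (n : ℕ)
    (hM : ((Fmat a n)ᵀ * Fmat a n).IsHermitian)
    -- `μ` enumerates the eigenvalues of `FᵀF` in nondecreasing order
    (μ : Fin n → ℝ) (hμmono : Monotone μ)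
    (hμeig : ∃ e : Equiv.Perm (Fin n), μ = hM.eigenvalues ∘ e) :
    -- for paper indices `i = 2, …, n` (here `k = i − 1 = 1, …, n − 1`):
    -- `ξ_{n−1,i−1} ≤ μ_{n,i} ≤ ξ_{n,i}`, and in particular
    -- `μ_{n,i} ∈ [(a−1)², (a+1)²]`
    ∀ k : Fin n, 1 ≤ (k : ℕ) →
      xiVal a (n - 1) (k : ℕ) ≤ μ k ∧ μ k ≤ xiVal a n ((k : ℕ) + 1) ∧
        μ k ∈ Set.Icc ((a - 1) ^ 2) ((a + 1) ^ 2) := by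
  obtain ⟨e, rfl⟩ := hμeig
  intro k hk
  have ha0 : 0 < a := by linarith
  have hF := hM.isOrthogonalEigenfamily.comp e.injective
  have hupper := eigenvalue_le_xiVal ha0 hF hμmono k
  obtain ⟨m, rfl⟩ : ∃ m, n = m + 1 := ⟨n - 1, by omega⟩
  have hlower := xiVal_le_eigenvalue ha0 hF hμmono hk
  exact ⟨hlower, hupper, (sq_sub_one_le_xiVal ha0.le _ _).trans hlower,
    hupper.trans (xiVal_le_sq_add_one ha0.le _ _)⟩

theorem statement16 (a : ℝ) (ha : 1 < a) (n : ℕ) (hn : 2 ≤ n)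
    (hM : ((Fmat a n)ᵀ * Fmat a n).IsHermitian)
    -- `μ` enumerates the eigenvalues of `FᵀF` in nondecreasing order
    (μ : Fin n → ℝ) (hμmono : Monotone μ)
    (hμeig : ∃ e : Equiv.Perm (Fin n), μ = hM.eigenvalues ∘ e) :
    -- for paper indices `i = 2, …, n` (here `k = i − 1 = 1, …, n − 1`):
    -- `ξ_{n−1,i−1} ≤ μ_{n,i} ≤ ξ_{n,i}`, and in particular
    -- `μ_{n,i} ∈ [(a−1)², (a+1)²]`
    ∀ k : Fin n, 1 ≤ (k : ℕ) →
      xiVal a (n - 1) (k : ℕ) ≤ μ k ∧ μ k ≤ xiVal a n ((k : ℕ) + 1) ∧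
        μ k ∈ Set.Icc ((a - 1) ^ 2) ((a + 1) ^ 2) :=
  statement16_general a ha n hM μ hμmono hμeig
end

section
/- For every a > 1 and every n ≥ 1, the smallest eigenvalue μ_{n,1} of FᵀF satisfies 2·log a − c₁/n ≤ −(1/n)·log μ_{n,1} ≤ 2·log a + c₂/n, where c₁ = 2·log(a+1) + aπ/(a² − 1) and c₂ = 2·log( a/(a² − 1) ) + 2aπ/(a² − 1). -/
/-!
The smallest eigenvalue of `FᵀF` is `μ₁ = min_{‖x‖ = 1} ‖F x‖²`, and `F` has the explicit inverse
`(F⁻¹)ᵢⱼ = a^(i-j)` for `j ≤ i`. For a unit eigenvector `v` of `μ₁`,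
`1 = ‖F⁻¹ (F v)‖² ≤ ‖F⁻¹‖_F² μ₁` with `‖F⁻¹‖_F² ≤ a^(2n+2) / (a² - 1)²`; the test vector
`x = F⁻¹ e₀ = (a^j)ⱼ` gives `μ₁ ‖x‖² ≤ ‖e₀‖² = 1` with `‖x‖² ≥ a^(2n-2)`. Taking logarithms,
`-log μ₁ / n` lies between `2 log a - 2 log a / n` and `2 log a + 2 log (a / (a² - 1)) / n`,
and the `π` terms of the stated bounds are only nonnegative slack.
-/

open Matrix Real

namespace Matrix

variable {m n R 𝕜 : Type*} [Fintype m] [Fintype n]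

theorem dotProduct_transpose_mul_mulVec [CommSemiring R] (F : Matrix m n R) (x : n → R) :
    x ⬝ᵥ ((Fᵀ * F) *ᵥ x) = (F *ᵥ x) ⬝ᵥ (F *ᵥ x) := by
  rw [← mulVec_mulVec, dotProduct_mulVec, vecMul_transpose]

theorem mulVec_dotProduct_self_le [CommSemiring R] [LinearOrder R] [IsStrictOrderedRing R]
    [ExistsAddOfLE R] (G : Matrix m n R) (w : n → R) :
    (G *ᵥ w) ⬝ᵥ (G *ᵥ w) ≤ (∑ i, ∑ j, G i j ^ 2) * (w ⬝ᵥ w) := by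
  simp only [mulVec, dotProduct, ← sq]
  rw [Finset.sum_mul]
  exact Finset.sum_le_sum fun i _ => Finset.sum_mul_sq_le_sq_mul_sq _ (G i) w

open scoped ComplexOrder

variable [DecidableEq n] [RCLike 𝕜]

theorem IsHermitian.posSemidef_sub_smul_one {A : Matrix n n 𝕜} (hA : A.IsHermitian) {c : ℝ}
    (hc : ∀ j, c ≤ hA.eigenvalues j) : (A - (c : 𝕜) • 1).PosSemidef := by
  have hconj : (c : 𝕜) • (1 : Matrix n n 𝕜) =
      Unitary.conjStarAlgAut 𝕜 _ hA.eigenvectorUnitary ((c : 𝕜) • 1) := by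
    rw [map_smul, map_one]
  rw [hA.spectral_theorem, hconj, ← map_sub, Unitary.conjStarAlgAut_apply,
    Unitary.isUnit_coe.posSemidef_star_right_conjugate_iff, smul_one_eq_diagonal,
    diagonal_sub, posSemidef_diagonal_iff]
  intro j
  simpa using hc j

theorem IsHermitian.mul_re_dotProduct_le {A : Matrix n n 𝕜} (hA : A.IsHermitian) {c : ℝ}
    (hc : ∀ j, c ≤ hA.eigenvalues j) (x : n → 𝕜) :
    c * RCLike.re (star x ⬝ᵥ x) ≤ RCLike.re (star x ⬝ᵥ (A *ᵥ x)) := by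
  have h := (hA.posSemidef_sub_smul_one hc).re_dotProduct_nonneg x
  rw [sub_mulVec, dotProduct_sub, smul_mulVec, one_mulVec, dotProduct_smul, map_sub,
    smul_eq_mul, RCLike.re_ofReal_mul] at h
  linarith

theorem one_le_sum_sq_mul_eigenvalues_of_mul_eq_one {F : Matrix m n ℝ} {G : Matrix n m ℝ}
    (hGF : G * F = 1) (hM : (Fᵀ * F).IsHermitian) (i : n) :
    1 ≤ (∑ k, ∑ l, G k l ^ 2) * hM.eigenvalues i := by
  set v : n → ℝ := ⇑(hM.eigenvectorBasis i)
  have hv : v ⬝ᵥ v = 1 := by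
    have h := real_inner_self_eq_norm_sq (hM.eigenvectorBasis i)
    rw [hM.eigenvectorBasis.orthonormal.1 i, one_pow, EuclideanSpace.inner_eq_star_dotProduct,
      star_trivial] at h
    exact h
  have heig : hM.eigenvalues i = (F *ᵥ v) ⬝ᵥ (F *ᵥ v) := by
    rw [hM.eigenvalues_eq, ← dotProduct_transpose_mul_mulVec]
    rfl
  calc 1 = (G *ᵥ (F *ᵥ v)) ⬝ᵥ (G *ᵥ (F *ᵥ v)) := by rw [mulVec_mulVec, hGF, one_mulVec, hv]
    _ ≤ _ := by rw [heig]; exact mulVec_dotProduct_self_le G _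

end Matrix

theorem geom_sum_le_pow_div {K : Type*} [Field K] [LinearOrder K] [IsStrictOrderedRing K] {b : K}
    (hb : 1 < b) (m : ℕ) :
    ∑ k ∈ Finset.range m, b ^ k ≤ b ^ m / (b - 1) := by
  rw [le_div_iff₀ (sub_pos.mpr hb), geom_sum_mul]
  linarith

noncomputable def FmatInv (a : ℝ) (n : ℕ) : Matrix (Fin n) (Fin n) ℝ :=
  fun i j => if (j : ℕ) ≤ i then a ^ ((i : ℕ) - j) else 0

theorem FmatInv_mul_Fmat (a : ℝ) (n : ℕ) : FmatInv a n * Fmat a n = 1 := by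
  ext i k
  simp only [mul_apply, one_apply, Fin.ext_iff]
  by_cases hk : (k : ℕ) + 1 < n
  · rw [Fintype.sum_eq_add k ⟨k + 1, hk⟩ (by simp [Fin.ext_iff]) fun j hj => by
      simp only [ne_eq, Fin.ext_iff] at hj; simp [Fmat, hj.1, hj.2]]
    simp only [FmatInv, Fmat]
    split_ifs <;> first
      | omega
      | (rw [show (i : ℕ) - k = (i - (k + 1)) + 1 by omega, pow_succ]; ring)
      | simp_all
  · rw [Fintype.sum_eq_single k fun j hj => by
      have : (j : ℕ) ≠ k + 1 := by omega
      simp only [ne_eq, Fin.ext_iff] at hj; simp [Fmat, hj, this]]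
    simp only [FmatInv, Fmat]
    split_ifs <;> first | omega | simp_all

theorem sq_FmatInv_le {a : ℝ} (ha : a ≠ 0) {n : ℕ} (i j : Fin n) :
    FmatInv a n i j ^ 2 ≤ (a ^ 2) ^ (i : ℕ) * (a ^ 2)⁻¹ ^ (j : ℕ) := by
  by_cases hji : (j : ℕ) ≤ i
  · rw [FmatInv, if_pos hji, ← pow_mul, mul_comm, pow_mul, pow_sub₀ _ (pow_ne_zero 2 ha) hji,
      inv_pow]
  · rw [FmatInv, if_neg hji, zero_pow two_ne_zero]
    positivity

theorem sum_sq_FmatInv_le {a : ℝ} (ha : 1 < a) (n : ℕ) :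
    ∑ i, ∑ j, FmatInv a n i j ^ 2 ≤ (a ^ 2) ^ (n + 1) / (a ^ 2 - 1) ^ 2 := by
  have hb : 1 < a ^ 2 := by nlinarith
  have hinv : ∑ j : Fin n, (a ^ 2)⁻¹ ^ (j : ℕ) ≤ a ^ 2 / (a ^ 2 - 1) := by
    rw [Fin.sum_univ_eq_sum_range ((a ^ 2)⁻¹ ^ ·), Finset.range_eq_Ico]
    refine (geom_sum_Ico_le_of_lt_one (by positivity) (inv_lt_one_of_one_lt₀ hb)).trans_eq ?_
    field_simp
  calc ∑ i, ∑ j, FmatInv a n i j ^ 2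
      ≤ (∑ i : Fin n, (a ^ 2) ^ (i : ℕ)) * ∑ j : Fin n, (a ^ 2)⁻¹ ^ (j : ℕ) := by
        rw [Finset.sum_mul_sum]
        gcongr with i _ j _
        exact sq_FmatInv_le (by positivity) i j
    _ ≤ (a ^ 2) ^ n / (a ^ 2 - 1) * (a ^ 2 / (a ^ 2 - 1)) := by
        rw [Fin.sum_univ_eq_sum_range ((a ^ 2) ^ ·)]
        gcongr
        exact geom_sum_le_pow_div hb n
    _ = (a ^ 2) ^ (n + 1) / (a ^ 2 - 1) ^ 2 := by rw [div_mul_div_comm, ← pow_succ, ← sq]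

theorem Fmat_mulVec_pow (a : ℝ) {n : ℕ} (hn : 0 < n) :
    Fmat a n *ᵥ (fun j => a ^ (j : ℕ)) = Pi.single ⟨0, hn⟩ 1 := by
  have hcol : (fun j : Fin n => a ^ (j : ℕ)) = FmatInv a n *ᵥ Pi.single ⟨0, hn⟩ 1 := by
    ext j
    simp [FmatInv]
  rw [hcol, mulVec_mulVec, mul_eq_one_comm.mp (FmatInv_mul_Fmat a n), one_mulVec]

theorem sq_div_pow_le_eigenvalues_Fmat {a : ℝ} (ha : 1 < a) {n : ℕ}
    (hM : ((Fmat a n)ᵀ * Fmat a n).IsHermitian) (i : Fin n) :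
    (a ^ 2 - 1) ^ 2 / (a ^ 2) ^ (n + 1) ≤ hM.eigenvalues i := by
  have hb : 0 < a ^ 2 - 1 := by nlinarith
  have hC := one_le_sum_sq_mul_eigenvalues_of_mul_eq_one (FmatInv_mul_Fmat a n) hM i
  have heig : 0 < hM.eigenvalues i :=
    pos_of_mul_pos_right (one_pos.trans_le hC) (by positivity)
  rw [← inv_div, inv_le_iff_one_le_mul₀' (by positivity)]
  exact hC.trans (mul_le_mul_of_nonneg_right (sum_sq_FmatInv_le ha n) heig.le)

theorem mul_pow_le_sq_of_le_eigenvalues_Fmat (a : ℝ) {n : ℕ} (hn : 0 < n)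
    (hM : ((Fmat a n)ᵀ * Fmat a n).IsHermitian) {c : ℝ} (hc : ∀ j, c ≤ hM.eigenvalues j) :
    c * (a ^ 2) ^ n ≤ a ^ 2 := by
  set x : Fin n → ℝ := fun j => a ^ (j : ℕ)
  have hFx : Fmat a n *ᵥ x = Pi.single ⟨0, hn⟩ 1 := Fmat_mulVec_pow a hn
  have hray : c * (x ⬝ᵥ x) ≤ 1 := by
    simpa [dotProduct_transpose_mul_mulVec, hFx] using hM.mul_re_dotProduct_le hc x
  have hlast : (a ^ 2) ^ n ≤ a ^ 2 * (x ⬝ᵥ x) := by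
    obtain ⟨m, rfl⟩ : ∃ m, n = m + 1 := ⟨n - 1, by omega⟩
    have h := Finset.single_le_sum (fun j _ => mul_self_nonneg (x j))
      (Finset.mem_univ (Fin.last m))
    calc (a ^ 2) ^ (m + 1) = a ^ 2 * (x (Fin.last m) * x (Fin.last m)) := by simp [x]; ring
      _ ≤ a ^ 2 * (x ⬝ᵥ x) := by gcongr; exact h
  rcases le_total 0 c with hc0 | hc0
  · nlinarith
  · nlinarith [pow_nonneg (sq_nonneg a) n]

theorem log_bounds_of_sq_div_pow_le_of_mul_pow_le_sq {a μ : ℝ} (ha : 1 < a) {n : ℕ} (hn : 0 < n)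
    (hlow : (a ^ 2 - 1) ^ 2 / (a ^ 2) ^ (n + 1) ≤ μ) (hup : μ * (a ^ 2) ^ n ≤ a ^ 2) :
    2 * Real.log a - (2 * Real.log (a + 1) + a * Real.pi / (a ^ 2 - 1)) / n
        ≤ -(1 / (n : ℝ)) * Real.log μ ∧
      -(1 / (n : ℝ)) * Real.log μ
        ≤ 2 * Real.log a
            + (2 * Real.log (a / (a ^ 2 - 1)) + 2 * a * Real.pi / (a ^ 2 - 1)) / n := by
  have hb : 0 < a ^ 2 - 1 := by nlinarith
  have hμ : 0 < μ := lt_of_lt_of_le (by positivity) hlow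
  have hn' : (0 : ℝ) < n := Nat.cast_pos.mpr hn
  have hπ : 0 ≤ a * π / (a ^ 2 - 1) := by positivity
  have hlogμ_low : 2 * log (a ^ 2 - 1) - 2 * (n + 1) * log a ≤ log μ := by
    have := Real.log_le_log (by positivity) hlow
    rw [Real.log_div (by positivity) (by positivity), Real.log_pow, Real.log_pow,
      Real.log_pow] at this
    push_cast at this
    linarith
  have hlogμ_up : log μ + 2 * n * log a ≤ 2 * log a := by
    have := Real.log_le_log (by positivity) hup
    rw [Real.log_mul hμ.ne' (by positivity), Real.log_pow, Real.log_pow] at this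
    push_cast at this
    linarith
  have hlog_a : log a ≤ log (a + 1) := Real.log_le_log (by linarith) (by linarith)
  have hlog_div : log (a / (a ^ 2 - 1)) = log a - log (a ^ 2 - 1) :=
    Real.log_div (by positivity) hb.ne'
  constructor
  · rw [← sub_nonneg]
    have : -(1 / (n : ℝ)) * log μ - (2 * log a - (2 * log (a + 1) + a * π / (a ^ 2 - 1)) / n)
        = (-log μ - 2 * n * log a + 2 * log (a + 1) + a * π / (a ^ 2 - 1)) / n := by
      field_simp; ring
    rw [this]
    exact div_nonneg (by linarith) hn'.le
  · rw [← sub_nonneg]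
    have : 2 * log a + (2 * log (a / (a ^ 2 - 1)) + 2 * a * π / (a ^ 2 - 1)) / n
        - -(1 / (n : ℝ)) * log μ
        = (2 * n * log a + 2 * log (a / (a ^ 2 - 1)) + 2 * (a * π / (a ^ 2 - 1)) + log μ) / n := by
      field_simp; ring
    rw [this]
    exact div_nonneg (by linarith) hn'.le

theorem statement17 (a : ℝ) (ha : 1 < a) (n : ℕ) (hn : 1 ≤ n)
    (hM : ((Fmat a n)ᵀ * Fmat a n).IsHermitian)
    -- `μ` enumerates the eigenvalues of `FᵀF` in nondecreasing order
    (μ : Fin n → ℝ) (hμmono : Monotone μ)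
    (hμeig : ∃ e : Equiv.Perm (Fin n), μ = hM.eigenvalues ∘ e) :
    2 * Real.log a - (2 * Real.log (a + 1) + a * Real.pi / (a ^ 2 - 1)) / n
        ≤ -(1 / (n : ℝ)) * Real.log (μ ⟨0, hn⟩) ∧
      -(1 / (n : ℝ)) * Real.log (μ ⟨0, hn⟩)
        ≤ 2 * Real.log a
            + (2 * Real.log (a / (a ^ 2 - 1)) + 2 * a * Real.pi / (a ^ 2 - 1)) / n := by
  obtain ⟨e, rfl⟩ := hμeig
  have hmin : ∀ j, (hM.eigenvalues ∘ e) ⟨0, hn⟩ ≤ hM.eigenvalues j := fun j => by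
    simpa using hμmono (show (⟨0, hn⟩ : Fin n) ≤ e.symm j from Nat.zero_le _)
  exact log_bounds_of_sq_div_pow_le_of_mul_pow_le_sq ha hn
    (sq_div_pow_le_eigenvalues_Fmat ha hM _) (mul_pow_le_sq_of_le_eigenvalues_Fmat a hn hM hmin)
end
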